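/- For every pair (j₁,j₂) ∈ Θ₂ and every λ ∈ (0,1/8], one has Σ_{p ∈ ℤ, p ≠ p₀} |μ(j₁,j₂,p,λ)| ≤ K λ, where K is a constant depending only on f and I. -/

import Mathlib

/-!
Write `F x = j₁ x + j₂ f x` and `q = |j₂|`, so that `c₁ q ≤ |F''| ≤ c₂ q` and `F' x₀ = 0`. The mean
value theorem gives `|F' x| ≥ c₁ q |x - x₀|` and `|F x - F x₀| ≤ c₂ q (x - x₀)² / 2`. If
`|p - p₀| = k ≥ 1`, then on the level set `|F - p| < λ` the phase is `≥ 3k/8` away from `F x₀`,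
so `|x - x₀| ≥ √(k / (c₂ q)) / 2`, where `|F'| ≥ c₁ √(k q / c₂) / 2`; each of the two branches of
the level set therefore has length `≤ 4 λ √c₂ / (c₁ √(k q))`. Since `I` lies within `3 (1 + M) / c₁`
of `x₀`, only `k ≤ B q` contribute, and `∑_{k ≤ B q} k^{-1/2} ≤ 2 √(B q)` absorbs the `√q`.
-/

open Set Real MeasureTheory

theorem sum_Icc_inv_sqrt_le (N : ℕ) : ∑ k ∈ Finset.Icc 1 N, (√(k : ℝ))⁻¹ ≤ 2 * √N := by
  induction N with
  | zero => simp
  | succ n ih =>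
    rw [Finset.sum_Icc_succ_top (by omega)]
    have hn : (0 : ℝ) < √(n + 1 : ℕ) := by positivity
    have hstep : (√(n + 1 : ℕ))⁻¹ ≤ 2 * √(n + 1 : ℕ) - 2 * √n := by
      rw [inv_le_iff_one_le_mul₀ hn]
      have hsq : √(n + 1 : ℕ) ^ 2 = √n ^ 2 + 1 := by
        rw [sq_sqrt (by positivity), sq_sqrt (by positivity)]; push_cast; ring
      nlinarith [sq_nonneg (√(n + 1 : ℕ) - √n)]
    linarith

theorem tsum_ne_le_of_le_div_sqrt_natAbs {u : ℤ → ℝ} {p₀ : ℤ} {N : ℕ} {C : ℝ} (hC : 0 ≤ C)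
    (hout : ∀ p, N < (p - p₀).natAbs → u p = 0)
    (hle : ∀ p, p ≠ p₀ → u p ≤ C / √(p - p₀).natAbs) :
    ∑' p : {p : ℤ // p ≠ p₀}, u p ≤ 4 * C * √N := by
  classical
  set S := (Finset.Icc (p₀ - N) (p₀ + N)).subtype (· ≠ p₀)
  have hS : ∀ p : {p : ℤ // p ≠ p₀}, p ∈ S ↔ (p.1 - p₀).natAbs ≤ N := by
    intro p
    simp only [S, Finset.mem_subtype, Finset.mem_Icc]
    omega
  rw [tsum_eq_sum (s := S) fun p hp => hout p (by rw [hS] at hp; omega)]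
  have hmaps : ∀ p ∈ S, (p.1 - p₀).natAbs ∈ Finset.Icc 1 N := fun p hp => by
    rw [hS] at hp
    have := p.2
    simp only [Finset.mem_Icc]
    omega
  have hfiber : ∀ k, (S.filter fun p => (p.1 - p₀).natAbs = k).card ≤ 2 := by
    intro k
    calc _ ≤ (Finset.univ : Finset Bool).card := by
          refine Finset.card_le_card_of_injOn (fun p => decide (p₀ < p.1))
            (fun _ _ => Finset.mem_coe.2 (Finset.mem_univ _)) ?_
          intro p hp p' hp' h
          simp only [Finset.mem_coe, Finset.mem_filter, decide_eq_decide] at hp hp' h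
          ext
          omega
      _ = 2 := rfl
  calc ∑ p ∈ S, u p ≤ ∑ p ∈ S, C / √(p.1 - p₀).natAbs := Finset.sum_le_sum fun p _ => hle p p.2
    _ = ∑ k ∈ Finset.Icc 1 N, ∑ p ∈ S with (p.1 - p₀).natAbs = k, C / √k := by
      rw [← Finset.sum_fiberwise_of_maps_to hmaps]
      refine Finset.sum_congr rfl fun k _ => Finset.sum_congr rfl fun p hp => ?_
      rw [(Finset.mem_filter.1 hp).2]
    _ ≤ ∑ k ∈ Finset.Icc 1 N, 2 * (C * (√k)⁻¹) := by
      refine Finset.sum_le_sum fun k _ => ?_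
      rw [Finset.sum_const, nsmul_eq_mul, div_eq_mul_inv]
      gcongr
      exact_mod_cast hfiber k
    _ ≤ 2 * C * (2 * √N) := by
      rw [← Finset.mul_sum, ← Finset.mul_sum, ← mul_assoc]
      gcongr
      exact sum_Icc_inv_sqrt_le N
    _ = 4 * C * √N := by ring

theorem mul_abs_sub_le_abs_sub_of_le_abs_deriv {g g' : ℝ → ℝ} {s : Set ℝ} [s.OrdConnected]
    {m : ℝ} (hg : ∀ t ∈ s, HasDerivAt g (g' t) t) (hm : ∀ t ∈ s, m ≤ |g' t|) {x y : ℝ}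
    (hx : x ∈ s) (hy : y ∈ s) : m * |y - x| ≤ |g y - g x| := by
  wlog hxy : x < y generalizing x y
  · rcases (not_lt.1 hxy).eq_or_lt with rfl | hyx
    · simp
    · simpa only [abs_sub_comm] using this hy hx hyx
  have hIcc : Icc x y ⊆ s := Set.OrdConnected.out ‹_› hx hy
  obtain ⟨c, hc, hslope⟩ := exists_hasDerivAt_eq_slope g g' hxy
    (fun t ht => (hg t (hIcc ht)).continuousAt.continuousWithinAt)
    (fun t ht => hg t (hIcc (Ioo_subset_Icc_self ht)))
  have hpos : 0 < y - x := sub_pos.2 hxy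
  rw [eq_div_iff hpos.ne'] at hslope
  rw [← hslope, abs_mul, abs_of_pos hpos]
  exact mul_le_mul_of_nonneg_right (hm c (hIcc (Ioo_subset_Icc_self hc))) hpos.le

theorem volume_le_ofReal_div_of_le_abs_deriv {g g' : ℝ → ℝ} {s E : Set ℝ} [s.OrdConnected]
    {m δ : ℝ} (hm : 0 < m) (hg : ∀ t ∈ s, HasDerivAt g (g' t) t) (hg' : ∀ t ∈ s, m ≤ |g' t|)
    (hE : E ⊆ s) (hδ : ∀ x ∈ E, ∀ y ∈ E, |g y - g x| ≤ δ) :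
    volume E ≤ ENNReal.ofReal (δ / m) := by
  refine (Real.volume_le_diam E).trans (Metric.ediam_le_of_forall_dist_le fun x hx y hy => ?_)
  rw [Real.dist_eq, le_div_iff₀ hm, mul_comm, abs_sub_comm]
  exact (mul_abs_sub_le_abs_sub_of_le_abs_deriv hg hg' (hE hx) (hE hy)).trans (hδ x hx y hy)

theorem abs_sub_le_half_mul_sq_of_abs_deriv_le {g g' : ℝ → ℝ} {a C : ℝ}
    (hg : ∀ t, HasDerivAt g (g' t) t) (hC : ∀ t, |g' t| ≤ C * |t - a|) (x : ℝ) :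
    |g x - g a| ≤ C / 2 * (x - a) ^ 2 := by
  have hsq : ∀ t, HasDerivAt (fun t => (t - a) ^ 2) (2 * (t - a)) t := fun t => by
    simpa using ((hasDerivAt_id t).sub_const a).fun_pow 2
  -- Cauchy's mean value theorem, comparing `g` with `(t - a) ^ 2`
  have cauchy : ∀ u v, u < v → ∃ c ∈ Ioo u v,
      ((v - a) ^ 2 - (u - a) ^ 2) * g' c = (g v - g u) * (2 * (c - a)) := fun u v huv =>
    exists_ratio_hasDerivAt_eq_ratio_slope g g' huv
      (fun t _ => (hg t).continuousAt.continuousWithinAt) (fun t _ => hg t)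
      _ _ (fun t _ => (hsq t).continuousAt.continuousWithinAt) (fun t _ => hsq t)
  have bound_of_cauchy : ∀ c, c ≠ a → (x - a) ^ 2 * |g' c| = |g x - g a| * (2 * |c - a|) →
      |g x - g a| ≤ C / 2 * (x - a) ^ 2 := by
    intro c hca h
    have hpos : 0 < 2 * |c - a| := mul_pos two_pos (abs_pos.2 (sub_ne_zero.2 hca))
    refine le_of_mul_le_mul_right ?_ hpos
    calc |g x - g a| * (2 * |c - a|) = (x - a) ^ 2 * |g' c| := h.symm
      _ ≤ (x - a) ^ 2 * (C * |c - a|) := mul_le_mul_of_nonneg_left (hC c) (sq_nonneg _)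
      _ = C / 2 * (x - a) ^ 2 * (2 * |c - a|) := by ring
  rcases lt_trichotomy x a with hxa | rfl | hax
  · obtain ⟨c, hc, h⟩ := cauchy x a hxa
    refine bound_of_cauchy c hc.2.ne ?_
    simpa only [sub_self, ne_eq, OfNat.ofNat_ne_zero, not_false_eq_true, zero_pow, zero_sub,
      neg_mul, abs_neg, abs_mul, abs_sq, abs_two, abs_sub_comm (g a)] using congrArg abs h
  · simp
  · obtain ⟨c, hc, h⟩ := cauchy a x hax
    refine bound_of_cauchy c hc.1.ne' ?_
    simpa only [sub_self, ne_eq, OfNat.ofNat_ne_zero, not_false_eq_true, zero_pow, sub_zero,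
      abs_mul, abs_sq, abs_two] using congrArg abs h

theorem volume_le_of_le_abs_deriv_off_ball {g g' : ℝ → ℝ} {E : Set ℝ} {x₀ r m δ : ℝ} (hm : 0 < m)
    (hg : ∀ t, HasDerivAt g (g' t) t) (hg' : ∀ t, r ≤ |t - x₀| → m ≤ |g' t|)
    (hE : ∀ x ∈ E, r ≤ |x - x₀|) (hδ : ∀ x ∈ E, ∀ y ∈ E, |g y - g x| ≤ δ) :
    volume E ≤ 2 * ENNReal.ofReal (δ / m) := by
  have hside : ∀ s : Set ℝ, s.OrdConnected → (∀ t ∈ s, r ≤ |t - x₀|) →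
      volume (E ∩ s) ≤ ENNReal.ofReal (δ / m) := fun s _ hs =>
    volume_le_ofReal_div_of_le_abs_deriv hm (fun t _ => hg t) (fun t ht => hg' t (hs t ht))
      inter_subset_right fun x hx y hy => hδ x hx.1 y hy.1
  have hsplit : E ⊆ E ∩ Ici (x₀ + r) ∪ E ∩ Iic (x₀ - r) := fun x hx => by
    rcases le_abs'.1 (hE x hx) with h | h
    · exact Or.inr ⟨hx, show x ≤ x₀ - r by linarith⟩
    · exact Or.inl ⟨hx, show x₀ + r ≤ x by linarith⟩
  calc volume E ≤ volume (E ∩ Ici (x₀ + r) ∪ E ∩ Iic (x₀ - r)) := measure_mono hsplit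
    _ ≤ volume (E ∩ Ici (x₀ + r)) + volume (E ∩ Iic (x₀ - r)) := measure_union_le _ _
    _ ≤ ENNReal.ofReal (δ / m) + ENNReal.ofReal (δ / m) := by
      gcongr
      · exact hside _ inferInstance fun t (ht : x₀ + r ≤ t) =>
          (show r ≤ t - x₀ by linarith).trans (le_abs_self _)
      · exact hside _ inferInstance fun t (ht : t ≤ x₀ - r) =>
          (show r ≤ -(t - x₀) by linarith).trans (neg_le_abs _)
    _ = 2 * ENNReal.ofReal (δ / m) := (two_mul _).symm

section Phase

variable {F F' F'' : ℝ → ℝ} {x₀ a b : ℝ}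

theorem mul_abs_sub_le_abs_deriv_of_le_abs_deriv2 (hF' : ∀ x, HasDerivAt F' (F'' x) x)
    (hx₀ : F' x₀ = 0) (hlow : ∀ x, a ≤ |F'' x|) (x : ℝ) : a * |x - x₀| ≤ |F' x| := by
  simpa [hx₀] using mul_abs_sub_le_abs_sub_of_le_abs_deriv (s := univ) (fun t _ => hF' t)
    (fun t _ => hlow t) (mem_univ x₀) (mem_univ x)

theorem abs_deriv_le_mul_abs_sub_of_abs_deriv2_le (hF' : ∀ x, HasDerivAt F' (F'' x) x)
    (hx₀ : F' x₀ = 0) (hup : ∀ x, |F'' x| ≤ b) (x : ℝ) : |F' x| ≤ b * |x - x₀| := by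
  simpa [hx₀] using Convex.norm_image_sub_le_of_norm_hasDerivWithin_le (s := univ)
    (fun t _ => (hF' t).hasDerivWithinAt) (fun t _ => hup t) convex_univ (mem_univ x₀) (mem_univ x)

theorem abs_sub_le_half_mul_sq_of_abs_deriv2_le (hF : ∀ x, HasDerivAt F (F' x) x)
    (hF' : ∀ x, HasDerivAt F' (F'' x) x) (hx₀ : F' x₀ = 0) (hup : ∀ x, |F'' x| ≤ b) (x : ℝ) :
    |F x - F x₀| ≤ b / 2 * (x - x₀) ^ 2 :=
  abs_sub_le_half_mul_sq_of_abs_deriv_le hF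
    (abs_deriv_le_mul_abs_sub_of_abs_deriv2_le hF' hx₀ hup) x

theorem abs_sub_le_half_mul_sq_add_one_of_abs_sub_lt (hF : ∀ x, HasDerivAt F (F' x) x)
    (hF' : ∀ x, HasDerivAt F' (F'' x) x) (hx₀ : F' x₀ = 0) (hup : ∀ x, |F'' x| ≤ b)
    {x y y₀ lam : ℝ} (hx : |F x - y| < lam) (hlam : lam ≤ 1 / 2) (hy₀ : |F x₀ - y₀| ≤ 1 / 2) :
    |y - y₀| ≤ b / 2 * (x - x₀) ^ 2 + 1 := by
  have := abs_sub_le_half_mul_sq_of_abs_deriv2_le hF hF' hx₀ hup x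
  linarith [abs_sub_le y (F x) y₀, abs_sub_le (F x) (F x₀) y₀, abs_sub_comm y (F x)]

theorem volume_setOf_abs_sub_lt_le (hF : ∀ x, HasDerivAt F (F' x) x)
    (hF' : ∀ x, HasDerivAt F' (F'' x) x) (hx₀ : F' x₀ = 0) (ha : 0 < a)
    (hlow : ∀ x, a ≤ |F'' x|) (hup : ∀ x, |F'' x| ≤ b) {y y₀ lam : ℝ} (hlam8 : lam ≤ 1 / 8)
    (hy₀ : |F x₀ - y₀| ≤ 1 / 2) (hy : 1 ≤ |y - y₀|) :
    volume {x | |F x - y| < lam} ≤ ENNReal.ofReal (8 * lam * √b / (a * √|y - y₀|)) := by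
  set k := |y - y₀|
  have hb : 0 < b := ha.trans_le ((hlow x₀).trans (hup x₀))
  set r := √k / (2 * √b)
  have hr2 : r ^ 2 = k / (4 * b) := by
    rw [div_pow, mul_pow, sq_sqrt (by positivity), sq_sqrt hb.le]; norm_num
  -- near `x₀` the phase stays within `1 / 2 + lam` of `y₀`, so it cannot reach `y`
  have hfar : ∀ x ∈ {x | |F x - y| < lam}, r ≤ |x - x₀| := by
    intro x (hx : |F x - y| < lam)
    have h1 := abs_sub_le_half_mul_sq_of_abs_deriv2_le hF hF' hx₀ hup x
    have h2 : k ≤ |F x - y| + |F x - F x₀| + |F x₀ - y₀| := by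
      linarith [abs_sub_le y (F x) y₀, abs_sub_le (F x) (F x₀) y₀, abs_sub_comm y (F x)]
    rw [← abs_of_pos (by positivity : 0 < r), ← sq_le_sq, hr2, div_le_iff₀ (by positivity)]
    nlinarith
  have hslope : ∀ t, r ≤ |t - x₀| → a * r ≤ |F' t| := fun t ht =>
    (mul_le_mul_of_nonneg_left ht ha.le).trans
      (mul_abs_sub_le_abs_deriv_of_le_abs_deriv2 hF' hx₀ hlow t)
  have hosc : ∀ x ∈ {x | |F x - y| < lam}, ∀ x' ∈ {x | |F x - y| < lam}, |F x' - F x| ≤ 2 * lam :=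
    fun x (hx : |F x - y| < lam) x' (hx' : |F x' - y| < lam) => by
      linarith [abs_sub_le (F x') y (F x), abs_sub_comm y (F x)]
  refine (volume_le_of_le_abs_deriv_off_ball (by positivity) hF hslope hfar hosc).trans_eq ?_
  rw [← ENNReal.ofReal_ofNat 2, ← ENNReal.ofReal_mul zero_le_two]
  congr 1
  simp only [r]
  field_simp
  ring

theorem tsum_volume_setOf_abs_sub_intCast_lt_le (hF : ∀ x, HasDerivAt F (F' x) x)
    (hF' : ∀ x, HasDerivAt F' (F'' x) x) (hx₀ : F' x₀ = 0) (ha : 0 < a)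
    (hlow : ∀ x, a ≤ |F'' x|) (hup : ∀ x, |F'' x| ≤ b) {s : Set ℝ} {D : ℝ}
    (hs : ∀ x ∈ s, |x - x₀| ≤ D) {p₀ : ℤ} (hp₀ : |F x₀ - p₀| ≤ 1 / 2) {lam : ℝ} (hlam : 0 ≤ lam)
    (hlam8 : lam ≤ 1 / 8) :
    ∑' p : {p : ℤ // p ≠ p₀}, (volume {x ∈ s | |F x - p| < lam}).toReal ≤
      32 * lam * √b * √(b / 2 * D ^ 2 + 1) / a := by
  have hb : 0 < b := ha.trans_le ((hlow x₀).trans (hup x₀))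
  have hout : ∀ p : ℤ, ⌊b / 2 * D ^ 2 + 1⌋₊ < (p - p₀).natAbs →
      (volume {x ∈ s | |F x - p| < lam}).toReal = 0 := by
    intro p hp
    suffices {x ∈ s | |F x - p| < lam} = ∅ by rw [this, measure_empty, ENNReal.toReal_zero]
    refine eq_empty_of_forall_notMem fun x ⟨hx, hxp⟩ => hp.not_ge (Nat.le_floor ?_)
    have h1 := abs_sub_le_half_mul_sq_add_one_of_abs_sub_lt hF hF' hx₀ hup hxp (by linarith) hp₀
    have h2 : (x - x₀) ^ 2 ≤ D ^ 2 := by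
      simpa only [sq_abs] using pow_le_pow_left₀ (abs_nonneg _) (hs x hx) 2
    rw [Nat.cast_natAbs]
    push_cast
    nlinarith
  have hle : ∀ p : ℤ, p ≠ p₀ → (volume {x ∈ s | |F x - p| < lam}).toReal ≤
      8 * lam * √b / a / √(p - p₀).natAbs := by
    intro p hp
    have hk : (1 : ℝ) ≤ |(p : ℝ) - p₀| := by exact_mod_cast Int.one_le_abs (sub_ne_zero.2 hp)
    refine ENNReal.toReal_le_of_le_ofReal (by positivity) ((measure_mono fun x hx => hx.2).trans ?_)
    rw [Nat.cast_natAbs, Int.cast_abs, Int.cast_sub, div_div]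
    exact volume_setOf_abs_sub_lt_le hF hF' hx₀ ha hlow hup hlam8 hp₀ hk
  refine (tsum_ne_le_of_le_div_sqrt_natAbs (by positivity) hout hle).trans ?_
  calc 4 * (8 * lam * √b / a) * √⌊b / 2 * D ^ 2 + 1⌋₊
      ≤ 4 * (8 * lam * √b / a) * √(b / 2 * D ^ 2 + 1) := by
        gcongr
        exact Nat.floor_le (by positivity)
    _ = 32 * lam * √b * √(b / 2 * D ^ 2 + 1) / a := by ring

end Phase

theorem sum_mu_over_p_ne_p0_general
    (ξ η c₁ c₂ : ℝ) (hc₁ : 0 < c₁)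
    (f f' f'' : ℝ → ℝ)
    (hf : ∀ x, HasDerivAt f (f' x) x)
    (hf' : ∀ x, HasDerivAt f' (f'' x) x)
    (hbd : ∀ x, c₁ ≤ |f'' x| ∧ |f'' x| ≤ c₂) :
    ∃ K : ℝ, 0 < K ∧
      ∀ Mmax : ℝ, IsGreatest ((fun x => |f' x|) '' Icc ξ η) Mmax →
      ∀ j₁ j₂ : ℤ, j₂ ≠ 0 → |(j₁ : ℝ)| ≤ 2 * (1 + Mmax) * |(j₂ : ℝ)| →
      ∀ x₀ : ℝ, (j₁ : ℝ) + (j₂ : ℝ) * f' x₀ = 0 →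
      ∀ p₀ : ℤ,
        -(1/2) < ((j₁ : ℝ) * x₀ + (j₂ : ℝ) * f x₀) - (p₀ : ℝ) →
        ((j₁ : ℝ) * x₀ + (j₂ : ℝ) * f x₀) - (p₀ : ℝ) ≤ 1/2 →
      ∀ lam : ℝ, 0 < lam → lam ≤ 1/8 →
        (∑' p : {p : ℤ // p ≠ p₀},
          (volume {x ∈ Icc ξ η |
            |(j₁ : ℝ) * x + (j₂ : ℝ) * f x - ((p : ℤ) : ℝ)| < lam}).toReal)
          ≤ K * lam := by
  have hc₂ : 0 < c₂ := hc₁.trans_le ((hbd 0).1.trans (hbd 0).2)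
  set B := c₂ / 2 * (3 * (1 + sSup ((fun x => |f' x|) '' Icc ξ η)) / c₁) ^ 2 + 1 with hB
  refine ⟨32 * √c₂ * √B / c₁, by positivity, ?_⟩
  intro Mmax hM j₁ j₂ hj₂ hj₁ x₀ hx₀ p₀ hp₀l hp₀r lam hlam hlam8
  rw [hM.csSup_eq] at hB
  have hq : 1 ≤ |(j₂ : ℝ)| := by exact_mod_cast Int.one_le_abs hj₂
  set q := |(j₂ : ℝ)|
  have hF : ∀ x, HasDerivAt (fun x => (j₁ : ℝ) * x + j₂ * f x) (j₁ + j₂ * f' x) x := fun x => by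
    simpa using ((hasDerivAt_id x).const_mul (j₁ : ℝ)).fun_add ((hf x).const_mul (j₂ : ℝ))
  have hF' : ∀ x, HasDerivAt (fun x => (j₁ : ℝ) + j₂ * f' x) (j₂ * f'' x) x := fun x =>
    ((hf' x).const_mul (j₂ : ℝ)).const_add _
  have hlow : ∀ x, c₁ * q ≤ |j₂ * f'' x| := fun x => by
    rw [abs_mul, mul_comm c₁]; exact mul_le_mul_of_nonneg_left (hbd x).1 (abs_nonneg _)
  have hup : ∀ x, |j₂ * f'' x| ≤ c₂ * q := fun x => by
    rw [abs_mul, mul_comm c₂]; exact mul_le_mul_of_nonneg_left (hbd x).2 (abs_nonneg _)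
  -- on `Icc ξ η` the phase has slope at most `3 (1 + Mmax) q`, which keeps `x₀` close
  have hdist : ∀ x ∈ Icc ξ η, |x - x₀| ≤ 3 * (1 + Mmax) / c₁ := by
    intro x hx
    have h1 := mul_abs_sub_le_abs_deriv_of_le_abs_deriv2 hF' hx₀ hlow x
    have h2 : |f' x| ≤ Mmax := hM.2 ⟨x, hx, rfl⟩
    rw [le_div_iff₀ hc₁]
    nlinarith [abs_add_le (j₁ : ℝ) (j₂ * f' x), abs_mul (j₂ : ℝ) (f' x), abs_nonneg (f' x)]
  have hsum := tsum_volume_setOf_abs_sub_intCast_lt_le hF hF' hx₀ (by positivity) hlow hup hdist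
    (abs_le.2 ⟨by linarith, hp₀r⟩) hlam.le hlam8
  refine hsum.trans ?_
  calc 32 * lam * √(c₂ * q) * √(c₂ * q / 2 * (3 * (1 + Mmax) / c₁) ^ 2 + 1) / (c₁ * q)
      ≤ 32 * lam * √(c₂ * q) * √(B * q) / (c₁ * q) := by
        gcongr
        rw [hB]
        nlinarith
    _ = 32 * √c₂ * √B / c₁ * lam := by
      rw [Real.sqrt_mul hc₂.le, Real.sqrt_mul (by positivity)]
      field_simp
      rw [sq_sqrt (by positivity)]
      ring

theorem sum_mu_over_p_ne_p0
    (ξ η c₁ c₂ : ℝ) (hξη : ξ ≤ η) (hc₁ : 0 < c₁) (hc₁₂ : c₁ ≤ c₂)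
    (f f' f'' : ℝ → ℝ)
    (hf : ∀ x, HasDerivAt f (f' x) x)
    (hf' : ∀ x, HasDerivAt f' (f'' x) x)
    (hf'' : Continuous f'')
    (hbd : ∀ x, c₁ ≤ |f'' x| ∧ |f'' x| ≤ c₂) :
    ∃ K : ℝ, 0 < K ∧
      ∀ Mmax : ℝ, IsGreatest ((fun x => |f' x|) '' Icc ξ η) Mmax →
      ∀ j₁ j₂ : ℤ, j₂ ≠ 0 → |(j₁ : ℝ)| ≤ 2 * (1 + Mmax) * |(j₂ : ℝ)| →
      ∀ x₀ : ℝ, (j₁ : ℝ) + (j₂ : ℝ) * f' x₀ = 0 →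
      ∀ p₀ : ℤ,
        -(1/2) < ((j₁ : ℝ) * x₀ + (j₂ : ℝ) * f x₀) - (p₀ : ℝ) →
        ((j₁ : ℝ) * x₀ + (j₂ : ℝ) * f x₀) - (p₀ : ℝ) ≤ 1/2 →
      ∀ lam : ℝ, 0 < lam → lam ≤ 1/8 →
        (∑' p : {p : ℤ // p ≠ p₀},
          (volume {x ∈ Icc ξ η |
            |(j₁ : ℝ) * x + (j₂ : ℝ) * f x - ((p : ℤ) : ℝ)| < lam}).toReal)
          ≤ K * lam :=
  sum_mu_over_p_ne_p0_general ξ η c₁ c₂ hc₁ f f' f'' hf hf' hbd
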